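/- arXiv:1109.4973 — 5 statements merged into one kernel-verified Lean document; each statement's English description precedes it below -/
import Mathlib

section
/- Let μ be a Borel probability measure on ℝ and r ∈ ℝ. Then the limit of (iy)·G_μ(r + iy) as y → 0⁺ equals μ({r}), i.e. lim_{y→0⁺} iy · ∫ dμ(t)/((r + iy) - t) = μ({r}). -/
/-! For `y ≠ 0` the integrand `i y / (r + i y - t)` has modulus at most `1`, and as `y → 0` it
tends to `1` at `t = r` and to `0` elsewhere; dominated convergence against the finite measure `μ`
gives the limit `μ {r}`. -/

open MeasureTheory Filter Topology Complex

lemma ofReal_add_I_mul_sub_ofReal_ne_zero {y : ℝ} (hy : y ≠ 0) (r t : ℝ) :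
    (r : ℂ) + I * y - t ≠ 0 := by
  intro h
  simpa [hy] using congrArg Complex.im h

lemma norm_I_mul_mul_inv_sub_le_one (r y t : ℝ) :
    ‖I * y * ((r : ℂ) + I * y - t)⁻¹‖ ≤ 1 := by
  rw [norm_mul, norm_inv, norm_mul, norm_I, one_mul, norm_real, ← div_eq_mul_inv]
  refine div_le_one_of_le₀ ?_ (norm_nonneg _)
  calc ‖y‖ = |((r : ℂ) + I * y - t).im| := by simp
    _ ≤ ‖(r : ℂ) + I * y - t‖ := abs_im_le_norm _

lemma tendsto_I_mul_mul_inv_sub (r t : ℝ) :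
    Tendsto (fun y : ℝ => I * y * ((r : ℂ) + I * y - t)⁻¹) (𝓝[≠] 0)
      (𝓝 (({r} : Set ℝ).indicator (fun _ => 1) t)) := by
  by_cases ht : t = r
  · subst ht
    rw [Set.indicator_of_mem (Set.mem_singleton t)]
    refine tendsto_const_nhds.congr' ?_
    filter_upwards [self_mem_nhdsWithin] with y hy
    have hIy : I * (y : ℂ) ≠ 0 := mul_ne_zero I_ne_zero (ofReal_ne_zero.mpr hy)
    rw [add_sub_cancel_left, mul_inv_cancel₀ hIy]
  · rw [Set.indicator_of_notMem (Set.notMem_singleton_iff.mpr ht)]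
    have hrt : (r : ℂ) - t ≠ 0 := sub_ne_zero.mpr (ofReal_injective.ne (Ne.symm ht))
    have hcont : ContinuousAt (fun y : ℝ => I * y * ((r : ℂ) + I * y - t)⁻¹) 0 :=
      (by fun_prop : Continuous fun y : ℝ => I * y).continuousAt.mul
        ((by fun_prop : Continuous fun y : ℝ => (r : ℂ) + I * y - t).continuousAt.inv₀
          (by simpa using hrt))
    simpa using hcont.tendsto.mono_left nhdsWithin_le_nhds

theorem tendsto_integral_I_mul_mul_inv_sub (μ : Measure ℝ) [IsFiniteMeasure μ] (r : ℝ) :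
    Tendsto (fun y : ℝ => ∫ t, I * y * ((r : ℂ) + I * y - t)⁻¹ ∂μ) (𝓝[≠] 0)
      (𝓝 (μ.real {r} : ℂ)) := by
  have hlim : ∫ t, ({r} : Set ℝ).indicator (fun _ => (1 : ℂ)) t ∂μ = μ.real {r} := by
    rw [integral_indicator_const _ (measurableSet_singleton r), real_smul, mul_one]
  rw [← hlim]
  refine tendsto_integral_filter_of_dominated_convergence (fun _ => 1) ?_ ?_
    (integrable_const 1) (ae_of_all _ (tendsto_I_mul_mul_inv_sub r))
  · filter_upwards [self_mem_nhdsWithin] with y hy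
    exact (continuous_const.mul ((by fun_prop : Continuous fun t : ℝ => (r : ℂ) + I * y - t).inv₀
      (ofReal_add_I_mul_sub_ofReal_ne_zero hy r))).aestronglyMeasurable
  · exact Eventually.of_forall fun y => ae_of_all _ (norm_I_mul_mul_inv_sub_le_one r y)

theorem cauchy_transform_atom
    (μ : Measure ℝ) [IsProbabilityMeasure μ] (r : ℝ) :
    Tendsto (fun y : ℝ =>
        (Complex.I * y) * ∫ t : ℝ, (((r : ℂ) + Complex.I * y) - (t : ℂ))⁻¹ ∂μ)
      (nhdsWithin 0 (Set.Ioi 0)) (nhds ((μ {r}).toReal : ℂ)) := by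
  refine ((tendsto_integral_I_mul_mul_inv_sub μ r).mono_left
    (nhdsWithin_mono _ fun _ hy => ne_of_gt hy)).congr fun y => ?_
  exact integral_const_mul _ _
end

section
/- Let η : M_n(ℂ) → M_n(ℂ) be given by η(a) = Σ_{j=1}^{N} a_j a a_j^* for fixed matrices a_1, …, a_N ∈ M_n(ℂ). If η^m = 0 for some m ≥ 1 (η is a nilpotent linear map), then every product a_{j_1} a_{j_2} ⋯ a_{j_m} of length m of the coefficient matrices vanishes; in particular each a_j is nilpotent with a_j^m = 0. -/
/-!
Unfolding the iterate, `η^[m] a = ∑ w, A_w * a * A_wᴴ` where `w` runs over the words of length `m`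
and `A_w` is the corresponding product. At `a = 1` this is a sum of positive semidefinite matrices
`A_w * A_wᴴ`, and it vanishes, so each `A_w` vanishes (compare traces).
-/

open Matrix

open scoped ComplexOrder

theorem iterate_sum_mul_mul_star {R ι : Type*} [Semiring R] [StarMul R] [Fintype ι]
    (A : ι → R) (k : ℕ) (a : R) :
    (fun x => ∑ j, A j * x * star (A j))^[k] a =
      ∑ w : Fin k → ι, (List.ofFn fun i => A (w i)).prod * a *
        star (List.ofFn fun i => A (w i)).prod := by
  induction k with
  | zero => simp
  | succ k ih =>
    rw [Function.iterate_succ_apply', ih, ← (Fin.consEquiv fun _ => ι).sum_comp,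
      Fintype.sum_prod_type]
    refine Finset.sum_congr rfl fun j _ => ?_
    simp only [Finset.mul_sum, Finset.sum_mul, Fin.consEquiv_apply, List.ofFn_succ,
      Fin.cons_zero, Fin.cons_succ, List.prod_cons, star_mul, mul_assoc]

theorem Matrix.sum_mul_conjTranspose_self_eq_zero_iff {ι m n R : Type*} [Fintype m]
    [Fintype n] [PartialOrder R] [Ring R] [StarRing R] [StarOrderedRing R]
    [NoZeroDivisors R] {s : Finset ι} {A : ι → Matrix m n R} :
    ∑ i ∈ s, A i * (A i)ᴴ = 0 ↔ ∀ i ∈ s, A i = 0 := by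
  refine ⟨fun h => ?_, fun h => Finset.sum_eq_zero fun i hi => by simp [h i hi]⟩
  have htrace : ∑ i ∈ s, (A i * (A i)ᴴ).trace = 0 := by rw [← trace_sum, h, trace_zero]
  rw [Finset.sum_eq_zero_iff_of_nonneg
    fun i _ => (posSemidef_self_mul_conjTranspose (A i)).trace_nonneg] at htrace
  exact fun i hi => trace_mul_conjTranspose_self_eq_zero_iff.mp (htrace i hi)

theorem nilpotent_cp_map_coefficients_nilpotent_general
    (n N : ℕ) (A : Fin N → Matrix (Fin n) (Fin n) ℂ)
    (η : Matrix (Fin n) (Fin n) ℂ → Matrix (Fin n) (Fin n) ℂ)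
    (hη : ∀ a, η a = ∑ j : Fin N, A j * a * (A j)ᴴ)
    (m : ℕ) (hnil : ∀ a, η^[m] a = 0) :
    (∀ j : Fin m → Fin N, (List.ofFn fun i : Fin m => A (j i)).prod = 0) ∧
    (∀ j : Fin N, A j ^ m = 0) := by
  obtain rfl : η = fun a => ∑ j, A j * a * star (A j) := funext hη
  have hwords : ∀ j : Fin m → Fin N, (List.ofFn fun i : Fin m => A (j i)).prod = 0 := by
    have hsum := (iterate_sum_mul_mul_star A m 1).symm.trans (hnil 1)
    simp only [mul_one, star_eq_conjTranspose] at hsum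
    exact fun j => sum_mul_conjTranspose_self_eq_zero_iff.mp hsum j (Finset.mem_univ j)
  exact ⟨hwords, fun j => by simpa [List.ofFn_const] using hwords fun _ => j⟩

theorem nilpotent_cp_map_coefficients_nilpotent
    (n N : ℕ) (A : Fin N → Matrix (Fin n) (Fin n) ℂ)
    (η : Matrix (Fin n) (Fin n) ℂ → Matrix (Fin n) (Fin n) ℂ)
    (hη : ∀ a, η a = ∑ j : Fin N, A j * a * (A j)ᴴ)
    (m : ℕ) (hm : 1 ≤ m) (hnil : ∀ a, η^[m] a = 0) :
    (∀ j : Fin m → Fin N, (List.ofFn fun i : Fin m => A (j i)).prod = 0) ∧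
    (∀ j : Fin N, A j ^ m = 0) :=
  nilpotent_cp_map_coefficients_nilpotent_general n N A η hη m hnil
end

section
/- Let φ : M_n(ℂ) → M_n(ℂ) be a positive linear map (mapping positive semidefinite matrices to positive semidefinite matrices) that is 2-positive (e.g., completely positive). Then for every a ∈ M_n(ℂ), φ(a)^* φ(a) ≤ ‖φ(1)‖ · φ(a^* a) in the Loewner order. -/
/-!
Applying `φ` blockwise to `[[aᴴ a, aᴴ], [a, 1]] = [a, 1]ᴴ [a, 1] ≥ 0` gives, by 2-positivity,
`[[φ(aᴴ a), φ(a)ᴴ], [φ(a), φ(1)]] ≥ 0`, and `φ(1) ≤ ‖φ(1)‖ • 1`. Testing this block matrix against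
the vectors `(x, -t • φ(a) x)`, `t : ℝ`, gives a real quadratic in `t` that is nonnegative everywhere;
its discriminant bound is `‖φ(a) x‖² ≤ ‖φ(1)‖ ⟪x, φ(aᴴ a) x⟫`.
-/

open Matrix
open scoped Matrix.Norms.L2Operator ComplexOrder

/-- The amplification of a map on `n × n` matrices to `(k*n) × (k*n)` matrices,
viewed as `k × k` block matrices with `n × n` blocks. -/
def amplify (n k : ℕ) (φ : Matrix (Fin n) (Fin n) ℂ → Matrix (Fin n) (Fin n) ℂ)
    (M : Matrix (Fin k × Fin n) (Fin k × Fin n) ℂ) :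
    Matrix (Fin k × Fin n) (Fin k × Fin n) ℂ :=
  fun p q => φ (fun r s => M (p.1, r) (q.1, s)) p.2 q.2

theorem le_mul_of_forall_quadratic_nonneg {c s α : ℝ} (hc : 0 ≤ c) (hs : 0 ≤ s)
    (h : ∀ t : ℝ, 0 ≤ c * s * (t * t) + -2 * s * t + α) : s ≤ c * α := by
  have hdisc := discrim_le_zero h
  rw [discrim] at hdisc
  rcases hs.eq_or_lt with rfl | hs
  · exact mul_nonneg hc (by simpa using h 0)
  · nlinarith

namespace Matrix

theorem dotProduct_mulVec_comp {I J K L R : Type*} [Fintype I] [Fintype J] [Fintype K] [Fintype L]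
    [NonUnitalNonAssocSemiring R] (N : Matrix I J (Matrix K L R)) (u : I × K → R) (v : J × L → R) :
    u ⬝ᵥ comp I J K L R N *ᵥ v = ∑ i, ∑ j, (fun k => u (i, k)) ⬝ᵥ N i j *ᵥ fun l => v (j, l) := by
  simp only [dotProduct, mulVec, comp_apply, Fintype.sum_prod_type, Finset.mul_sum]
  rw [Finset.sum_congr rfl fun i _ => Finset.sum_comm]

theorem isHermitian_comp_fin_two_iff {α m : Type*} [InvolutiveStar α] {A B C D : Matrix m m α} :
    (comp (Fin 2) (Fin 2) m m α !![A, B; C, D]).IsHermitian ↔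
      A.IsHermitian ∧ B = Cᴴ ∧ D.IsHermitian := by
  rw [isHermitian_comp_iff, IsHermitian, ← Matrix.ext_iff]
  simp only [conjTranspose_apply, of_apply, cons_val', cons_val_fin_one, star_eq_conjTranspose,
    Fin.forall_fin_two, cons_val_zero, cons_val_one, IsHermitian]
  refine ⟨fun ⟨⟨hA, hB⟩, _, hD⟩ => ⟨hA, hB.symm, hD⟩, fun ⟨hA, hB, hD⟩ => ⟨⟨hA, hB.symm⟩, ?_, hD⟩⟩
  rw [hB, conjTranspose_conjTranspose]

theorem star_dotProduct_mulVec_comp_fin_two {R m : Type*} [NonUnitalNonAssocSemiring R] [Star R]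
    [Fintype m] (A B C D : Matrix m m R) (x y : m → R) :
    star (fun p : Fin 2 × m => ![x, y] p.1 p.2) ⬝ᵥ comp (Fin 2) (Fin 2) m m R !![A, B; C, D] *ᵥ
        (fun p => ![x, y] p.1 p.2) =
      star x ⬝ᵥ A *ᵥ x + star x ⬝ᵥ B *ᵥ y + (star y ⬝ᵥ C *ᵥ x + star y ⬝ᵥ D *ᵥ y) := by
  rw [dotProduct_mulVec_comp]
  simp only [Fin.sum_univ_two]
  rfl

theorem posSemidef_comp_conjTranspose_mul_self_fin_two {R m : Type*} [Ring R] [PartialOrder R]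
    [StarRing R] [StarOrderedRing R] [Fintype m] [DecidableEq m] (a : Matrix m m R) :
    (comp (Fin 2) (Fin 2) m m R !![aᴴ * a, aᴴ; a, 1]).PosSemidef := by
  have hgram : !![aᴴ * a, aᴴ; a, 1] = !![a, 1; 0, 0]ᴴ * !![a, 1; 0, 0] := by
    ext i j : 1
    fin_cases i <;> fin_cases j <;> simp [mul_apply, Fin.sum_univ_two, star_eq_conjTranspose]
  rw [hgram, ← compRingEquiv_apply, map_mul, compRingEquiv_apply, compRingEquiv_apply,
    ← conjTranspose_comp']
  exact posSemidef_conjTranspose_mul_self _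

section RCLike

variable {𝕜 m : Type*} [RCLike 𝕜] [Fintype m]

theorem IsHermitian.posSemidef_of_re_dotProduct_nonneg {A : Matrix m m 𝕜} (hA : A.IsHermitian)
    (h : ∀ x, 0 ≤ RCLike.re (star x ⬝ᵥ A *ᵥ x)) : A.PosSemidef :=
  .of_dotProduct_mulVec_nonneg hA fun x =>
    RCLike.nonneg_iff.mpr ⟨h x, hA.im_star_dotProduct_mulVec_self x⟩

theorem PosSemidef.smul_sub_conjTranspose_mul_self_of_comp [DecidableEq m] {A B D : Matrix m m 𝕜}
    {c : ℝ} (hc : 0 ≤ c) (hM : (comp (Fin 2) (Fin 2) m m 𝕜 !![A, Bᴴ; B, D]).PosSemidef)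
    (hD : ((c : 𝕜) • 1 - D).PosSemidef) : ((c : 𝕜) • A - Bᴴ * B).PosSemidef := by
  have hA : A.IsHermitian := (isHermitian_comp_fin_two_iff.mp hM.isHermitian).1
  refine IsHermitian.posSemidef_of_re_dotProduct_nonneg ?_ fun x => ?_
  · exact (hA.smul (RCLike.conj_ofReal c)).sub (isHermitian_conjTranspose_mul_self B)
  set y := B *ᵥ x with hy
  have hcross : star x ⬝ᵥ Bᴴ *ᵥ y = star y ⬝ᵥ y := by
    rw [dotProduct_mulVec, ← star_mulVec]
  have hquad : ∀ t : ℝ, 0 ≤ c * RCLike.re (star y ⬝ᵥ y) * (t * t) +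
      -2 * RCLike.re (star y ⬝ᵥ y) * t + RCLike.re (star x ⬝ᵥ A *ᵥ x) := by
    intro t
    have hMt := hM.re_dotProduct_nonneg (fun p => ![x, -(t : 𝕜) • y] p.1 p.2)
    have hDy := hD.re_dotProduct_nonneg y
    simp only [star_dotProduct_mulVec_comp_fin_two, mulVec_neg, mulVec_smul, dotProduct_neg,
      dotProduct_smul, smul_dotProduct, neg_smul, neg_dotProduct, star_neg, star_smul,
      RCLike.star_def, RCLike.conj_ofReal, hcross, ← hy, smul_eq_mul, map_add, map_neg,
      RCLike.re_ofReal_mul] at hMt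
    simp only [sub_mulVec, dotProduct_sub, smul_mulVec, one_mulVec, dotProduct_smul, smul_eq_mul,
      map_sub, RCLike.re_ofReal_mul] at hDy
    nlinarith [mul_nonneg (mul_self_nonneg t) hDy]
  have hyy := le_mul_of_forall_quadratic_nonneg hc
    (RCLike.nonneg_iff.mp (dotProduct_star_self_nonneg y)).1 hquad
  rw [sub_mulVec, dotProduct_sub, smul_mulVec, dotProduct_smul, ← mulVec_mulVec, ← hy, hcross,
    smul_eq_mul, map_sub, RCLike.re_ofReal_mul]
  linarith

end RCLike

open scoped MatrixOrder in
theorem IsHermitian.posSemidef_norm_smul_one_sub {m : Type*} [Fintype m] [DecidableEq m]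
    {D : Matrix m m ℂ} (hD : D.IsHermitian) : ((‖D‖ : ℂ) • 1 - D).PosSemidef := by
  have h := IsSelfAdjoint.le_algebraMap_norm_self (a := D) hD
  rwa [Matrix.le_iff, Algebra.algebraMap_eq_smul_one, ← Complex.coe_smul] at h

end Matrix

theorem amplify_comp (n k : ℕ) (φ : Matrix (Fin n) (Fin n) ℂ → Matrix (Fin n) (Fin n) ℂ)
    (M : Matrix (Fin k) (Fin k) (Matrix (Fin n) (Fin n) ℂ)) :
    amplify n k φ (comp (Fin k) (Fin k) (Fin n) (Fin n) ℂ M) =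
      comp (Fin k) (Fin k) (Fin n) (Fin n) ℂ (M.map φ) :=
  rfl

theorem kadison_schwarz_two_positive_general
    (n : ℕ) (φ : Matrix (Fin n) (Fin n) ℂ →ₗ[ℂ] Matrix (Fin n) (Fin n) ℂ)
    (h2pos : ∀ M : Matrix (Fin 2 × Fin n) (Fin 2 × Fin n) ℂ,
      M.PosSemidef → (amplify n 2 (fun a => φ a) M).PosSemidef)
    (a : Matrix (Fin n) (Fin n) ℂ) :
    ((‖φ 1‖ : ℂ) • φ (aᴴ * a) - (φ a)ᴴ * (φ a)).PosSemidef := by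
  have hH : (comp (Fin 2) (Fin 2) (Fin n) (Fin n) ℂ
      !![φ (aᴴ * a), φ aᴴ; φ a, φ 1]).PosSemidef := by
    have := h2pos _ (posSemidef_comp_conjTranspose_mul_self_fin_two a)
    rw [amplify_comp, eta_fin_two (Matrix.map _ _)] at this
    simpa using this
  obtain ⟨-, hadj, hφ1⟩ := isHermitian_comp_fin_two_iff.mp hH.isHermitian
  rw [hadj] at hH
  exact hH.smul_sub_conjTranspose_mul_self_of_comp (norm_nonneg (φ 1))
    hφ1.posSemidef_norm_smul_one_sub

theorem kadison_schwarz_two_positive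
    (n : ℕ) (φ : Matrix (Fin n) (Fin n) ℂ →ₗ[ℂ] Matrix (Fin n) (Fin n) ℂ)
    (hpos : ∀ a : Matrix (Fin n) (Fin n) ℂ, a.PosSemidef → (φ a).PosSemidef)
    (h2pos : ∀ M : Matrix (Fin 2 × Fin n) (Fin 2 × Fin n) ℂ,
      M.PosSemidef → (amplify n 2 (fun a => φ a) M).PosSemidef)
    (a : Matrix (Fin n) (Fin n) ℂ) :
    ((‖φ 1‖ : ℂ) • φ (aᴴ * a) - (φ a)ᴴ * (φ a)).PosSemidef :=
  kadison_schwarz_two_positive_general n φ h2pos a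
end

section
/- Let φ : M_n(ℂ) → M_n(ℂ) be a nonzero completely positive map. Then there exists a unique maximal projection q ≠ 1 in M_n(ℂ) with φ(q) = 0 such that every projection p with φ(p) = 0 satisfies p ≤ q; moreover, for every positive semidefinite c with φ(c) = 0 one has c·q = q·c = c. -/
open Matrix
open scoped ComplexOrder

/-- Complete positivity of a linear map on matrices. -/
def IsCompletelyPositive (n : ℕ)
    (φ : Matrix (Fin n) (Fin n) ℂ →ₗ[ℂ] Matrix (Fin n) (Fin n) ℂ) : Prop :=
  ∀ k : ℕ, ∀ M : Matrix (Fin k × Fin n) (Fin k × Fin n) ℂ,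
    M.PosSemidef → (amplify n k (fun a => φ a) M).PosSemidef

/-!
Among the positive matrices killed by `φ` pick one, `c₀`, of maximal rank, and let `q` be its
support projection. As `q ≤ t • c₀` for some `t`, positivity of `φ` gives `φ q = 0`. For any other
positive `c` with `φ c = 0`, `c₀ + c` is again such a matrix, so its rank does not exceed that of
`c₀`; since `ker (c₀ + c) = ker c₀ ∩ ker c`, this forces `ker c₀ ⊆ ker c`, i.e. `c * q = c`. For a
projection `p` this says `p ≤ q`. Finally `q ≠ 1`: a positive map killing `1` kills every positive
matrix (each lies below a multiple of `1`), hence every matrix.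
-/

open scoped MatrixOrder ComplexStarModule

section PositiveMap

variable {R E F : Type*} [Semiring R] [AddCommGroup E] [PartialOrder E] [IsOrderedAddMonoid E]
  [Module R E] [AddCommGroup F] [PartialOrder F] [IsOrderedAddMonoid F] [Module R F]

lemma LinearMap.map_eq_zero_of_nonneg_of_le {φ : E →ₗ[R] F} (hφ : ∀ a, 0 ≤ a → 0 ≤ φ a) {a b : E}
    (ha : 0 ≤ a) (hab : a ≤ b) (hb : φ b = 0) : φ a = 0 :=
  le_antisymm (by simpa [hb] using hφ (b - a) (sub_nonneg.2 hab)) (hφ a ha)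

end PositiveMap

namespace Matrix

variable {ι 𝕜 : Type*} [Fintype ι] [RCLike 𝕜]

lemma ker_mulVecLin_add_of_nonneg {a b : Matrix ι ι 𝕜} (ha : 0 ≤ a) (hb : 0 ≤ b) :
    LinearMap.ker (a + b).mulVecLin = LinearMap.ker a.mulVecLin ⊓ LinearMap.ker b.mulVecLin := by
  ext x
  simp only [LinearMap.mem_ker, Submodule.mem_inf, mulVecLin_apply, add_mulVec]
  refine ⟨fun h => ?_, fun ⟨hax, hbx⟩ => by rw [hax, hbx, add_zero]⟩
  have hsum : star x ⬝ᵥ a *ᵥ x + star x ⬝ᵥ b *ᵥ x = 0 := by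
    rw [← dotProduct_add, h, dotProduct_zero]
  obtain ⟨hax, hbx⟩ := (add_eq_zero_iff_of_nonneg (ha.posSemidef.dotProduct_mulVec_nonneg x)
    (hb.posSemidef.dotProduct_mulVec_nonneg x)).1 hsum
  exact ⟨(ha.posSemidef.dotProduct_mulVec_zero_iff x).1 hax,
    (hb.posSemidef.dotProduct_mulVec_zero_iff x).1 hbx⟩

lemma ker_mulVecLin_le_of_rank_add_le {a b : Matrix ι ι 𝕜} (ha : 0 ≤ a) (hb : 0 ≤ b)
    (h : (a + b).rank ≤ a.rank) : LinearMap.ker a.mulVecLin ≤ LinearMap.ker b.mulVecLin := by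
  have hle : LinearMap.ker (a + b).mulVecLin ≤ LinearMap.ker a.mulVecLin := by
    rw [ker_mulVecLin_add_of_nonneg ha hb]
    exact inf_le_left
  have heq : LinearMap.ker (a + b).mulVecLin = LinearMap.ker a.mulVecLin := by
    refine Submodule.eq_of_le_of_finrank_le hle ?_
    have hab := LinearMap.finrank_range_add_finrank_ker (a + b).mulVecLin
    have ha' := LinearMap.finrank_range_add_finrank_ker a.mulVecLin
    rw [← rank] at hab ha'
    omega
  rw [← heq, ker_mulVecLin_add_of_nonneg ha hb]
  exact inf_le_right

variable [DecidableEq ι]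

noncomputable def supportProj (a : Matrix ι ι 𝕜) : Matrix ι ι 𝕜 :=
  cfc (fun x : ℝ => if x = 0 then 0 else 1) a

lemma continuousOn_spectrum (a : Matrix ι ι 𝕜) (f : ℝ → ℝ) : ContinuousOn f (spectrum ℝ a) :=
  a.finite_real_spectrum.continuousOn f

lemma isStarProjection_supportProj (a : Matrix ι ι 𝕜) : IsStarProjection a.supportProj := by
  refine ⟨?_, cfc_predicate _ a⟩
  rw [supportProj, IsIdempotentElem,
    ← cfc_mul _ _ a (continuousOn_spectrum a _) (continuousOn_spectrum a _)]
  congr 1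
  ext x
  split_ifs <;> simp

lemma mul_supportProj {a : Matrix ι ι 𝕜} (ha : a.IsHermitian) : a * a.supportProj = a := by
  conv_lhs => enter [1]; rw [← cfc_id' ℝ a ha.isSelfAdjoint]
  rw [supportProj, ← cfc_mul _ _ a (continuousOn_spectrum a _) (continuousOn_spectrum a _)]
  conv_rhs => rw [← cfc_id' ℝ a ha.isSelfAdjoint]
  congr 1
  ext x
  split_ifs <;> simp_all

lemma exists_supportProj_le_smul {a : Matrix ι ι 𝕜} (ha : 0 ≤ a) :
    ∃ t : ℝ, a.supportProj ≤ t • a := by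
  obtain ⟨t, ht⟩ := (a.finite_real_spectrum.image (·⁻¹)).bddAbove
  refine ⟨t, ?_⟩
  rw [← cfc_const_mul_id t a ha.posSemidef.isHermitian.isSelfAdjoint]
  refine cfc_mono (fun x hx => ?_) (continuousOn_spectrum a _) (continuousOn_spectrum a _)
  have hxt : x⁻¹ ≤ t := ht ⟨x, hx, rfl⟩
  split_ifs with hx0
  · simp [hx0]
  · rw [← inv_mul_cancel₀ hx0]
    exact mul_le_mul_of_nonneg_right hxt (spectrum_nonneg_of_nonneg ha hx)

lemma mul_supportProj_of_ker_le {a b : Matrix ι ι 𝕜} (ha : a.IsHermitian)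
    (h : LinearMap.ker a.mulVecLin ≤ LinearMap.ker b.mulVecLin) : b * a.supportProj = b := by
  have ha1 : a * (1 - a.supportProj) = 0 := by rw [mul_sub, mul_one, mul_supportProj ha, sub_self]
  have hb1 : b * (1 - a.supportProj) = 0 := by
    refine ext_of_mulVec_single fun i => ?_
    have hx : (1 - a.supportProj) *ᵥ Pi.single i 1 ∈ LinearMap.ker a.mulVecLin := by
      rw [LinearMap.mem_ker, mulVecLin_apply, mulVec_mulVec, ha1, zero_mulVec]
    rw [← mulVec_mulVec, zero_mulVec]
    exact h hx
  rwa [mul_sub, mul_one, sub_eq_zero, eq_comm] at hb1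

end Matrix

lemma LinearMap.exists_isStarProjection_absorbing_kernel {ι 𝕜 F : Type*} [Fintype ι]
    [DecidableEq ι] [RCLike 𝕜] [AddCommGroup F] [PartialOrder F] [IsOrderedAddMonoid F]
    [Module 𝕜 F] {φ : Matrix ι ι 𝕜 →ₗ[𝕜] F} (hφ : ∀ a, 0 ≤ a → 0 ≤ φ a) :
    ∃ q, IsStarProjection q ∧ φ q = 0 ∧ ∀ c, 0 ≤ c → φ c = 0 → c * q = c := by
  set K := {c : Matrix ι ι 𝕜 | 0 ≤ c ∧ φ c = 0}
  have hbdd : BddAbove (Matrix.rank '' K) :=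
    ⟨Fintype.card ι, by rintro _ ⟨c, -, rfl⟩; exact c.rank_le_card_width⟩
  obtain ⟨_, ⟨c₀, ⟨hc₀, hφc₀⟩, rfl⟩, hmax⟩ :=
    hbdd.exists_isGreatest_of_nonempty ⟨_, 0, ⟨le_rfl, map_zero φ⟩, rfl⟩
  refine ⟨c₀.supportProj, c₀.isStarProjection_supportProj, ?_, fun c hc hφc => ?_⟩
  · obtain ⟨t, ht⟩ := exists_supportProj_le_smul hc₀
    refine φ.map_eq_zero_of_nonneg_of_le hφ (c₀.isStarProjection_supportProj.nonneg) ht ?_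
    rw [RCLike.real_smul_eq_coe_smul (K := 𝕜), map_smul, hφc₀, smul_zero]
  · have hsum : c₀ + c ∈ K := ⟨add_nonneg hc₀ hc, by rw [map_add, hφc₀, hφc, add_zero]⟩
    exact mul_supportProj_of_ker_le hc₀.posSemidef.isHermitian
      (ker_mulVecLin_le_of_rank_add_le hc₀ hc (hmax ⟨_, hsum, rfl⟩))

lemma LinearMap.eq_zero_of_map_one_eq_zero {ι F : Type*} [Fintype ι] [DecidableEq ι]
    [AddCommGroup F] [PartialOrder F] [IsOrderedAddMonoid F] [Module ℂ F]
    {φ : Matrix ι ι ℂ →ₗ[ℂ] F} (hφ : ∀ a, 0 ≤ a → 0 ≤ φ a) (h1 : φ 1 = 0) : φ = 0 := by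
  have hnonneg : ∀ a, 0 ≤ a → φ a = 0 := by
    intro a ha
    obtain ⟨r, hr⟩ := a.finite_real_spectrum.bddAbove
    refine φ.map_eq_zero_of_nonneg_of_le hφ ha (le_algebraMap_of_spectrum_le fun x hx => hr hx) ?_
    rw [IsScalarTower.algebraMap_apply ℝ ℂ, Algebra.algebraMap_eq_smul_one, map_smul, h1,
      smul_zero]
  have hselfAdjoint : ∀ a : Matrix ι ι ℂ, IsSelfAdjoint a → φ a = 0 := fun a ha => by
    rw [← CFC.posPart_sub_negPart a ha, map_sub, hnonneg _ (CFC.posPart_nonneg a),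
      hnonneg _ (CFC.negPart_nonneg a), sub_zero]
  ext1 a
  rw [← realPart_add_I_smul_imaginaryPart a, map_add, map_smul, hselfAdjoint _ (ℜ a).2,
    hselfAdjoint _ (ℑ a).2, smul_zero, add_zero, LinearMap.zero_apply]

-- The `1 × 1` amplification of `a` is `a` itself, up to reindexing.
lemma IsCompletelyPositive.map_nonneg {n : ℕ}
    {φ : Matrix (Fin n) (Fin n) ℂ →ₗ[ℂ] Matrix (Fin n) (Fin n) ℂ}
    (hcp : IsCompletelyPositive n φ) {a : Matrix (Fin n) (Fin n) ℂ} (ha : 0 ≤ a) : 0 ≤ φ a :=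
  ((hcp 1 _ (ha.posSemidef.submatrix Prod.snd)).submatrix fun i => ((0 : Fin 1), i)).nonneg

theorem cp_maximal_kernel_projection
    (n : ℕ) (φ : Matrix (Fin n) (Fin n) ℂ →ₗ[ℂ] Matrix (Fin n) (Fin n) ℂ)
    (hcp : IsCompletelyPositive n φ) (hφ : φ ≠ 0) :
    ∃! q : Matrix (Fin n) (Fin n) ℂ,
      q.IsHermitian ∧ q * q = q ∧ q ≠ 1 ∧ φ q = 0 ∧
      (∀ p : Matrix (Fin n) (Fin n) ℂ, p.IsHermitian → p * p = p → φ p = 0 →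
        (q - p).PosSemidef) ∧
      (∀ c : Matrix (Fin n) (Fin n) ℂ, c.PosSemidef → φ c = 0 →
        c * q = c ∧ q * c = c) := by
  have hpos : ∀ a, 0 ≤ a → 0 ≤ φ a := fun a => hcp.map_nonneg
  obtain ⟨q, hq, hφq, habsorb⟩ := φ.exists_isStarProjection_absorbing_kernel hpos
  have habsorb' : ∀ c, 0 ≤ c → φ c = 0 → q * c = c := fun c hc hφc => by
    simpa [hq.isSelfAdjoint.star_eq, (IsSelfAdjoint.of_nonneg hc).star_eq] using
      congr(star $(habsorb c hc hφc))
  have hmax : ∀ p, IsStarProjection p → φ p = 0 → p ≤ q := fun p hp hφp =>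
    hp.le_of_mul_eq_left hq (habsorb p hp.nonneg hφp)
  have hq1 : q ≠ 1 := by
    rintro rfl
    exact hφ (φ.eq_zero_of_map_one_eq_zero hpos hφq)
  refine ⟨q, ⟨hq.isSelfAdjoint, hq.isIdempotentElem, hq1, hφq,
    fun p hp hpp hφp => hmax p ⟨hpp, hp⟩ hφp,
    fun c hc hφc => ⟨habsorb c hc.nonneg hφc, habsorb' c hc.nonneg hφc⟩⟩, ?_⟩
  rintro q' ⟨hq'h, hq'q', -, hφq', hq'max, -⟩
  exact le_antisymm (hmax q' ⟨hq'q', hq'h⟩ hφq')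
    (hq'max q hq.isSelfAdjoint hq.isIdempotentElem hφq)
end

section
/- Fix n ≥ 1, real numbers α_1, …, α_n and positive reals ω_1, …, ω_{n−1}. For ξ ∈ ℂ with Im ξ > 0, define g_n(ξ) = 1/(ξ − α_n) and, by downward recursion, g_k(ξ) = 1/(ξ − α_k − ω_k g_{k+1}(ξ)) for 1 ≤ k ≤ n−1 (all denominators are nonzero since each g_k maps the upper half-plane to the lower half-plane). Let D = diag(α_1, …, α_n), let V ∈ M_n(ℂ) be the matrix with entries V_{k+1,k} = ω_k^{1/2} and zeros elsewhere, and let η(a) = V a V^*. Then the diagonal matrix G(ξ) = diag(g_1(ξ), …, g_n(ξ)) satisfies the functional equation ξ·G(ξ) = I + (D + η(G(ξ)))·G(ξ). -/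
/-!
For `Im ξ > 0`, `a` real and `w ≥ 0`, the map `z ↦ (ξ - a - w z)⁻¹` sends the lower half-plane
into itself, so downward induction from `g_n = (ξ - α_n)⁻¹` keeps every `g_k(ξ)` there and every
denominator nonzero. Since `V` is supported on the subdiagonal, `Vᴴ G V` is again diagonal, with
entries `ω_k g_{k+1}` (and `0` in the last slot), so the matrix identity splits into the scalar
identities `ξ g_k = 1 + (α_k + ω_k g_{k+1}) g_k`, which are the recursion with the inverse cleared.
-/

open Matrix

lemma Complex.ne_zero_of_im_pos {z : ℂ} (hz : 0 < z.im) : z ≠ 0 :=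
  fun h => by simp [h] at hz

lemma Complex.im_inv_neg_of_im_pos {z : ℂ} (hz : 0 < z.im) : z⁻¹.im < 0 := by
  rw [Complex.inv_im]
  exact div_neg_of_neg_of_pos (neg_neg_of_pos hz) (Complex.normSq_pos.mpr (ne_zero_of_im_pos hz))

lemma Complex.im_sub_ofReal_sub_ofReal_mul_pos {ξ z : ℂ} {a w : ℝ} (hξ : 0 < ξ.im) (hw : 0 ≤ w)
    (hz : z.im < 0) : 0 < (ξ - a - w * z).im := by
  have him : (ξ - a - w * z).im = ξ.im - w * z.im := by simp
  rw [him]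
  nlinarith

lemma im_neg_of_backward_recursion {n : ℕ} {α ω : ℕ → ℝ} {g : ℕ → ℂ} {ξ : ℂ} (hξ : 0 < ξ.im)
    (hω : ∀ k, 1 ≤ k → k ≤ n - 1 → 0 ≤ ω k) (hgn : g n = (ξ - α n)⁻¹)
    (hgk : ∀ k, 1 ≤ k → k ≤ n - 1 → g k = (ξ - α k - ω k * g (k + 1))⁻¹) :
    ∀ k, 1 ≤ k → k ≤ n → (g k).im < 0 := by
  intro k hk1 hkn
  induction hkn using Nat.decreasingInduction with
  | self => exact hgn ▸ Complex.im_inv_neg_of_im_pos (by simpa using hξ)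
  | of_succ k hk ih =>
    have hk' : k ≤ n - 1 := by omega
    rw [hgk k hk1 hk']
    exact Complex.im_inv_neg_of_im_pos
      (Complex.im_sub_ofReal_sub_ofReal_mul_pos hξ (hω k hk1 hk') (ih (by omega)))

lemma conjTranspose_mul_diagonal_mul_of_subdiagonal {R : Type*} [Semiring R] [StarRing R]
    {n : ℕ} {V : Matrix (Fin n) (Fin n) R} (s d : ℕ → R)
    (hV : ∀ i j : Fin n, V i j = if (i : ℕ) = j + 1 then s j else 0) :
    Vᴴ * diagonal (fun k : Fin n => d k) * V =
      diagonal fun j : Fin n => if (j : ℕ) + 1 < n then star (s j) * d (j + 1) * s j else 0 := by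
  ext i j
  simp only [mul_apply, diagonal_apply, conjTranspose_apply, hV, mul_ite, mul_zero]
  rcases lt_or_ge ((j : ℕ) + 1) n with h | h
  · rw [Finset.sum_eq_single ⟨j + 1, h⟩ (fun b _ hb => if_neg fun hb' => hb (Fin.ext hb'))
      (by simp)]
    by_cases hij : i = j
    · subst hij; simp [h]
    · simp [hij, Fin.val_ne_of_ne (Ne.symm hij)]
  · rw [Finset.sum_eq_zero fun b _ => if_neg (by omega)]
    split_ifs <;> first | rfl | omega

lemma mul_inv_sub_sub_eq_one_add {K : Type*} [Field K] {ξ a b : K} (h : ξ - a - b ≠ 0) :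
    ξ * (ξ - a - b)⁻¹ = 1 + (a + b) * (ξ - a - b)⁻¹ := by
  linear_combination mul_inv_cancel₀ h

theorem tridiagonal_functional_equation_general
    (n : ℕ) (α : ℕ → ℝ) (ω : ℕ → ℝ)
    (hω : ∀ k, 1 ≤ k → k ≤ n - 1 → 0 < ω k)
    (g : ℕ → ℂ → ℂ)
    (hgn : ∀ ξ : ℂ, 0 < ξ.im → g n ξ = (ξ - (α n : ℂ))⁻¹)
    (hgk : ∀ k, 1 ≤ k → k ≤ n - 1 → ∀ ξ : ℂ, 0 < ξ.im →
      g k ξ = (ξ - (α k : ℂ) - (ω k : ℂ) * g (k + 1) ξ)⁻¹)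
    (D V : Matrix (Fin n) (Fin n) ℂ)
    (hD : D = Matrix.diagonal (fun k : Fin n => ((α ((k : ℕ) + 1) : ℝ) : ℂ)))
    (hV : V = fun i j : Fin n =>
      if (i : ℕ) = (j : ℕ) + 1 then ((Real.sqrt (ω ((j : ℕ) + 1)) : ℝ) : ℂ) else 0)
    (ξ : ℂ) (hξ : 0 < ξ.im)
    (G : Matrix (Fin n) (Fin n) ℂ)
    (hG : G = Matrix.diagonal (fun k : Fin n => g ((k : ℕ) + 1) ξ)) :
    (∀ k, 1 ≤ k → k ≤ n → (g k ξ).im < 0) ∧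
    ξ • G = 1 + (D + Vᴴ * G * V) * G := by
  have him : ∀ k, 1 ≤ k → k ≤ n → (g k ξ).im < 0 :=
    im_neg_of_backward_recursion hξ (fun k h1 h2 => (hω k h1 h2).le) (hgn ξ hξ)
      (fun k h1 h2 => hgk k h1 h2 ξ hξ)
  refine ⟨him, ?_⟩
  have hVGV := conjTranspose_mul_diagonal_mul_of_subdiagonal
    (fun j => ((Real.sqrt (ω (j + 1)) : ℝ) : ℂ)) (fun k => g (k + 1) ξ)
    fun i j => congrFun (congrFun hV i) j
  subst hD hG
  rw [hVGV, diagonal_add, diagonal_mul_diagonal, ← diagonal_one, diagonal_add, ← diagonal_smul]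
  congr 1
  funext k
  simp only [Pi.smul_apply, smul_eq_mul]
  by_cases hk : (k : ℕ) + 1 < n
  · have hωk := hω (k + 1) (by omega) (by omega)
    rw [if_pos hk, Complex.star_def, Complex.conj_ofReal, mul_right_comm, ← Complex.ofReal_mul,
      Real.mul_self_sqrt hωk.le, hgk (k + 1) (by omega) (by omega) ξ hξ]
    refine mul_inv_sub_sub_eq_one_add (Complex.ne_zero_of_im_pos ?_)
    exact Complex.im_sub_ofReal_sub_ofReal_mul_pos hξ hωk.le (him (k + 2) (by omega) (by omega))
  · have hkn : (k : ℕ) + 1 = n := by omega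
    rw [if_neg hk, hkn, hgn ξ hξ, ← sub_zero (ξ - _)]
    exact mul_inv_sub_sub_eq_one_add (Complex.ne_zero_of_im_pos (by simpa using hξ))

theorem tridiagonal_functional_equation
    (n : ℕ) (hn : 1 ≤ n) (α : ℕ → ℝ) (ω : ℕ → ℝ)
    (hω : ∀ k, 1 ≤ k → k ≤ n - 1 → 0 < ω k)
    (g : ℕ → ℂ → ℂ)
    (hgn : ∀ ξ : ℂ, 0 < ξ.im → g n ξ = (ξ - (α n : ℂ))⁻¹)
    (hgk : ∀ k, 1 ≤ k → k ≤ n - 1 → ∀ ξ : ℂ, 0 < ξ.im →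
      g k ξ = (ξ - (α k : ℂ) - (ω k : ℂ) * g (k + 1) ξ)⁻¹)
    (D V : Matrix (Fin n) (Fin n) ℂ)
    (hD : D = Matrix.diagonal (fun k : Fin n => ((α ((k : ℕ) + 1) : ℝ) : ℂ)))
    (hV : V = fun i j : Fin n =>
      if (i : ℕ) = (j : ℕ) + 1 then ((Real.sqrt (ω ((j : ℕ) + 1)) : ℝ) : ℂ) else 0)
    (ξ : ℂ) (hξ : 0 < ξ.im)
    (G : Matrix (Fin n) (Fin n) ℂ)
    (hG : G = Matrix.diagonal (fun k : Fin n => g ((k : ℕ) + 1) ξ)) :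
    (∀ k, 1 ≤ k → k ≤ n → (g k ξ).im < 0) ∧
    ξ • G = 1 + (D + Vᴴ * G * V) * G :=
  tridiagonal_functional_equation_general n α ω hω g hgn hgk D V hD hV ξ hξ G hG
end
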